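/- With h(x) = x e^{x²/2} ∫_x^∞ e^{−z²/2} dz, the second derivative satisfies h''(x) = (x²+3)h(x) − (x²+2), and hence h is concave on (0, ∞). -/

import Mathlib

/-!
Write `φ z = exp (-z²/2)`, `Q x = ∫_x^∞ φ` and `R x = exp (x²/2) Q x` (the Mills ratio), so that
`h x = x R x`. Since `Q' = -φ` and `exp (x²/2) φ = 1`, the Mills ratio solves `R' = x R - 1`, and
differentiating `h = x R` twice gives `h'' = (x² + 3) h - (x² + 2)`.

Hence `h'' ≤ 0` amounts to `x (x² + 3) Q ≤ (x² + 2) φ`. The difference of the two sides tends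
to `0` at `∞`, and its derivative is `3 (x φ - (x² + 1) Q)`, which is `≤ 0` by the classical lower
bound `x φ / (x² + 1) ≤ Q`; that bound is proved the same way, the derivative of
`Q - x φ / (x² + 1)` being `-2 φ / (x² + 1)²`. A function with nonpositive derivative that tends to
`0` at `∞` is nonnegative.
-/

open Real MeasureTheory

noncomputable def h (x : ℝ) : ℝ :=
  x * Real.exp (x ^ 2 / 2) * ∫ z in Set.Ioi x, Real.exp (-z ^ 2 / 2)

open Set Filter Topology

theorem hasDerivAt_integral_Ioi {f : ℝ → ℝ} (hint : Integrable f) (hcont : Continuous f)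
    (x : ℝ) : HasDerivAt (fun a => ∫ z in Ioi a, f z) (-f x) x := by
  have hsplit : (fun a => ∫ z in Ioi a, f z) = fun a => (∫ z in Ioi 0, f z) - ∫ z in 0..a, f z :=
    funext fun a => eq_sub_of_add_eq' <|
      intervalIntegral.integral_interval_add_Ioi hint.integrableOn hint.integrableOn
  rw [hsplit]
  exact (intervalIntegral.integral_hasDerivAt_right hint.intervalIntegrable
    (hcont.stronglyMeasurableAtFilter _ _) hcont.continuousAt).const_sub _

noncomputable def phi (x : ℝ) : ℝ := exp (-x ^ 2 / 2)

noncomputable def gaussTail (x : ℝ) : ℝ := ∫ z in Ioi x, phi z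

noncomputable def millsRatio (x : ℝ) : ℝ := exp (x ^ 2 / 2) * gaussTail x

theorem phi_pos (x : ℝ) : 0 < phi x := exp_pos _

theorem continuous_phi : Continuous phi := by
  unfold phi; fun_prop

theorem integrable_phi : Integrable phi := by
  refine (integrable_exp_neg_mul_sq (b := 1 / 2) (by norm_num)).congr (ae_of_all _ fun x => ?_)
  simp only [phi]; ring_nf

theorem exp_mul_phi (x : ℝ) : exp (x ^ 2 / 2) * phi x = 1 := by
  rw [phi, ← exp_add, ← exp_zero]; ring_nf

theorem hasDerivAt_phi (x : ℝ) : HasDerivAt phi (-x * phi x) x := by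
  refine (((hasDerivAt_pow 2 x).neg.div_const 2).exp).congr_deriv ?_
  simp only [phi, Pi.neg_apply]; push_cast; ring

theorem tendsto_phi_atTop : Tendsto phi atTop (𝓝 0) :=
  tendsto_exp_atBot.comp <|
    (tendsto_neg_atBot_iff.mpr (tendsto_pow_atTop two_ne_zero)).atBot_div_const two_pos

theorem tendsto_sq_add_mul_phi_atTop (c : ℝ) :
    Tendsto (fun x => (x ^ 2 + c) * phi x) atTop (𝓝 0) := by
  have hsq : Tendsto (fun x : ℝ => x ^ 2 * phi x) atTop (𝓝 0) := by
    have := ((tendsto_pow_mul_exp_neg_atTop_nhds_zero 1).comp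
      ((tendsto_pow_atTop two_ne_zero).atTop_div_const two_pos)).const_mul 2
    rw [mul_zero] at this
    refine this.congr fun x => ?_
    simp only [Function.comp_apply, phi]; ring_nf
  simpa [add_mul] using hsq.add (tendsto_phi_atTop.const_mul c)

theorem hasDerivAt_gaussTail (x : ℝ) : HasDerivAt gaussTail (-phi x) x :=
  hasDerivAt_integral_Ioi integrable_phi continuous_phi x

theorem gaussTail_nonneg (x : ℝ) : 0 ≤ gaussTail x :=
  setIntegral_nonneg measurableSet_Ioi fun z _ => (phi_pos z).le

theorem tendsto_gaussTail_atTop : Tendsto gaussTail atTop (𝓝 0) :=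
  tendsto_integral_Ioi_zero tendsto_id

theorem gaussTail_le {x : ℝ} (hx : 0 < x) : gaussTail x ≤ phi x / x := by
  have hderiv : ∀ z ∈ Ici x, HasDerivAt (fun y => -phi y) (z * phi z) z := fun z _ =>
    (hasDerivAt_phi z).neg.congr_deriv (by ring)
  have hnonneg : ∀ z ∈ Ioi x, 0 ≤ z * phi z := fun z hz =>
    mul_nonneg (hx.trans hz).le (phi_pos z).le
  have hlim : Tendsto (fun y => -phi y) atTop (𝓝 0) := by simpa using tendsto_phi_atTop.neg
  have hint := integrableOn_Ioi_deriv_of_nonneg' hderiv hnonneg hlim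
  have hmoment : ∫ z in Ioi x, z * phi z = phi x := by
    rw [integral_Ioi_of_hasDerivAt_of_nonneg' hderiv hnonneg hlim]; ring
  rw [le_div_iff₀ hx, ← hmoment, gaussTail, ← integral_mul_const]
  refine setIntegral_mono_on (integrable_phi.integrableOn.mul_const x) hint measurableSet_Ioi
    fun z hz => ?_
  rw [mul_comm]
  exact mul_le_mul_of_nonneg_right (le_of_lt hz) (phi_pos z).le

theorem gaussTail_ge (x : ℝ) : x * phi x / (x ^ 2 + 1) ≤ gaussTail x := by
  set F := fun y => gaussTail y - y * phi y / (y ^ 2 + 1)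
  have hderiv : ∀ y, HasDerivAt F (-(2 * phi y / (y ^ 2 + 1) ^ 2)) y := fun y => by
    have hden : y ^ 2 + 1 ≠ 0 := by positivity
    refine ((hasDerivAt_gaussTail y).sub ((hasDerivAt_id' y |>.mul (hasDerivAt_phi y)).div
      ((hasDerivAt_pow 2 y).add_const 1) hden)).congr_deriv ?_
    simp only [Pi.mul_apply]; field_simp; push_cast; ring
  have hlim : Tendsto F atTop (𝓝 0) := by
    have hfrac : Tendsto (fun y => y * phi y / (y ^ 2 + 1)) atTop (𝓝 0) := by
      refine squeeze_zero' (eventually_atTop.mpr ⟨0, fun y hy => by have := phi_pos y; positivity⟩)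
        (eventually_atTop.mpr ⟨0, fun y hy => ?_⟩) tendsto_phi_atTop
      rw [div_le_iff₀ (by positivity)]
      nlinarith [phi_pos y, sq_nonneg (y - 1)]
    simpa using tendsto_gaussTail_atTop.sub hfrac
  exact sub_nonneg.mp <| (antitone_of_hasDerivAt_nonpos hderiv fun y => by
    have := phi_pos y; simp only [Pi.zero_apply, neg_nonpos]; positivity).le_of_tendsto hlim x

theorem mul_gaussTail_le (x : ℝ) : x * (x ^ 2 + 3) * gaussTail x ≤ (x ^ 2 + 2) * phi x := by
  set G := fun y => (y ^ 2 + 2) * phi y - y * (y ^ 2 + 3) * gaussTail y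
  have hderiv : ∀ y, HasDerivAt G (3 * (y * phi y - (y ^ 2 + 1) * gaussTail y)) y := fun y => by
    refine ((((hasDerivAt_pow 2 y).add_const 2).mul (hasDerivAt_phi y)).sub
      (((hasDerivAt_id' y).mul ((hasDerivAt_pow 2 y).add_const 3)).mul
        (hasDerivAt_gaussTail y))).congr_deriv ?_
    simp only [Pi.mul_apply]; push_cast; ring
  have hlim : Tendsto G atTop (𝓝 0) := by
    have hprod : Tendsto (fun y => y * (y ^ 2 + 3) * gaussTail y) atTop (𝓝 0) := by
      refine squeeze_zero' (eventually_atTop.mpr ⟨0, fun y hy =>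
          mul_nonneg (by positivity) (gaussTail_nonneg y)⟩)
        (eventually_atTop.mpr ⟨1, fun y hy => ?_⟩) (tendsto_sq_add_mul_phi_atTop 3)
      have hy0 : 0 < y := by linarith
      calc y * (y ^ 2 + 3) * gaussTail y ≤ y * (y ^ 2 + 3) * (phi y / y) :=
            mul_le_mul_of_nonneg_left (gaussTail_le hy0) (by positivity)
        _ = (y ^ 2 + 3) * phi y := by field_simp
    simpa using (tendsto_sq_add_mul_phi_atTop 2).sub hprod
  exact sub_nonneg.mp <| (antitone_of_hasDerivAt_nonpos hderiv fun y => by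
    have := (div_le_iff₀' (by positivity)).mp (gaussTail_ge y)
    simp only [Pi.zero_apply]; linarith).le_of_tendsto hlim x

theorem hasDerivAt_millsRatio (x : ℝ) : HasDerivAt millsRatio (x * millsRatio x - 1) x := by
  refine ((((hasDerivAt_pow 2 x).div_const 2).exp).mul (hasDerivAt_gaussTail x)).congr_deriv ?_
  rw [millsRatio, ← exp_mul_phi x]; push_cast; ring

theorem h_eq_mul_millsRatio : h = fun x => x * millsRatio x :=
  funext fun _ => mul_assoc _ _ _

theorem hasDerivAt_h (x : ℝ) : HasDerivAt h ((1 + x ^ 2) * millsRatio x - x) x := by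
  rw [h_eq_mul_millsRatio]
  refine ((hasDerivAt_id' x).mul (hasDerivAt_millsRatio x)).congr_deriv ?_
  ring

theorem deriv_h : deriv h = fun x => (1 + x ^ 2) * millsRatio x - x :=
  funext fun x => (hasDerivAt_h x).deriv

theorem hasDerivAt_deriv_h (x : ℝ) :
    HasDerivAt (deriv h) ((x ^ 2 + 3) * h x - (x ^ 2 + 2)) x := by
  rw [deriv_h, h_eq_mul_millsRatio]
  refine ((((hasDerivAt_pow 2 x).const_add 1).mul (hasDerivAt_millsRatio x)).sub
    (hasDerivAt_id' x)).congr_deriv ?_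
  push_cast; ring

theorem mul_millsRatio_le (x : ℝ) : x * (x ^ 2 + 3) * millsRatio x ≤ x ^ 2 + 2 := by
  have := mul_le_mul_of_nonneg_left (mul_gaussTail_le x) (exp_pos (x ^ 2 / 2)).le
  calc x * (x ^ 2 + 3) * millsRatio x = exp (x ^ 2 / 2) * (x * (x ^ 2 + 3) * gaussTail x) := by
        rw [millsRatio]; ring
    _ ≤ exp (x ^ 2 / 2) * ((x ^ 2 + 2) * phi x) := this
    _ = x ^ 2 + 2 := by rw [mul_left_comm, exp_mul_phi, mul_one]

theorem stmt_16 :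
    (∀ x : ℝ, 0 < x →
      deriv (deriv h) x = (x ^ 2 + 3) * h x - (x ^ 2 + 2)) ∧
    ConcaveOn ℝ (Set.Ioi (0 : ℝ)) h := by
  refine ⟨fun x _ => (hasDerivAt_deriv_h x).deriv, ?_⟩
  have hdiff : Differentiable ℝ h := fun x => (hasDerivAt_h x).differentiableAt
  refine concaveOn_of_deriv2_nonpos (convex_Ioi 0) hdiff.continuous.continuousOn
    hdiff.differentiableOn (fun x _ => (hasDerivAt_deriv_h x).differentiableAt.differentiableWithinAt)
    fun x _ => ?_
  show deriv (deriv h) x ≤ 0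
  rw [(hasDerivAt_deriv_h x).deriv, h_eq_mul_millsRatio]
  linear_combination mul_millsRatio_le x
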